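/- Let (Y_t)_{t≥0} satisfy E[Y_t Y_s] = σ² e^{−λ|t−s|} with σ² > 0, λ > 0 and let C > 0 with C ≠ λ. Define X_t = Y_t + C ∫_0^t e^{−(λ−C)(t−s)} Y_s ds. Then E[X_t²] = σ² (1 − (C/(λ−C))(e^{−2(λ−C)t} − 1)), which is strictly greater than σ² for t > 0 and increasing in t; moreover if C > λ then E[X_t²] → +∞ as t → ∞. -/

import Mathlib

/-!
Write `X_t = Y_t + C I_t` with `I_t = ∫₀ᵗ k(s) Y_s ds` and `k(s) = e^{-(λ-C)(t-s)}`. Since `Y` is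
square integrable on `[0, t] × Ω`, Fubini gives
`E[X_t²] = σ² (1 + 2C ∫₀ᵗ k(s) e^{-λ(t-s)} ds + C² ∫₀ᵗ∫₀ᵗ k(s) k(u) e^{-λ|s-u|} du ds)`.
Splitting the inner integral at `u = s` and integrating by parts, the double integral equals
`2 ∫₀ᵗ k(s) e^{λs} ∫ₛᵗ k(u) e^{-λu} du ds`; with this form the cross term and `C` times the double
integral add up pointwise to `e^{-2(λ-C)(t-s)}`, whose integral is the closed form. That closed
form has derivative `2Cσ² e^{-2(λ-C)t} > 0`, and blows up when `λ < C`.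
-/

open MeasureTheory Real intervalIntegral Set Function
open scoped Interval ENNReal

theorem integral_exp_const_mul {c : ℝ} (hc : c ≠ 0) (a b : ℝ) :
    ∫ x in a..b, exp (c * x) = (exp (c * b) - exp (c * a)) / c := by
  rw [integral_comp_mul_left exp hc, integral_exp, smul_eq_mul, inv_mul_eq_div]

theorem integral_mul_integral_swap_triangle {f g : ℝ → ℝ} (hf : Continuous f) (hg : Continuous g)
    (a b : ℝ) :
    ∫ s in a..b, f s * ∫ u in a..s, g u = ∫ s in a..b, g s * ∫ u in s..b, f u := by
  have hG : ∀ s, HasDerivAt (fun s => ∫ u in a..s, g u) (g s) s := fun s =>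
    (hg.integral_hasStrictDerivAt a s).hasDerivAt
  have hF : ∀ s, HasDerivAt (fun s => ∫ u in s..b, f u) (-f s) s := fun s =>
    ((hf.integral_hasStrictDerivAt b s).hasDerivAt.neg).congr_of_eventuallyEq
      (Filter.Eventually.of_forall fun x => integral_symm b x)
  have := integral_mul_deriv_eq_deriv_mul (fun s _ => hF s) (fun s _ => hG s)
    (hf.neg.intervalIntegrable a b) (hg.intervalIntegrable a b)
  simp only [integral_same, zero_mul, mul_zero, sub_zero, zero_sub, neg_mul,
    intervalIntegral.integral_neg, neg_neg] at this
  rw [← this]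
  exact integral_congr fun s _ => mul_comm _ _

theorem integral_mul_integral_mul_exp_neg_abs_sub {ψ : ℝ → ℝ} (hψ : Continuous ψ) (lam : ℝ)
    {a b : ℝ} (hab : a ≤ b) :
    ∫ s in a..b, ψ s * ∫ u in a..b, ψ u * exp (-lam * |s - u|)
      = 2 * ∫ s in a..b, ψ s * exp (lam * s) * ∫ u in s..b, ψ u * exp (-lam * u) := by
  have hcont : ∀ c, Continuous fun u => ψ u * exp (c * u) := fun c => by fun_prop
  have split : ∀ s ∈ [[a, b]], ∫ u in a..b, ψ u * exp (-lam * |s - u|)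
      = exp (-lam * s) * (∫ u in a..s, ψ u * exp (lam * u))
        + exp (lam * s) * ∫ u in s..b, ψ u * exp (-lam * u) := by
    intro s hs
    rw [uIcc_of_le hab] at hs
    have hi : ∀ x y, IntervalIntegrable (fun u => ψ u * exp (-lam * |s - u|)) volume x y :=
      fun x y => Continuous.intervalIntegrable (by fun_prop) x y
    rw [← integral_add_adjacent_intervals (hi a s) (hi s b),
      ← intervalIntegral.integral_const_mul, ← intervalIntegral.integral_const_mul]
    congr 1 <;> refine integral_congr fun u hu => ?_
    · rw [uIcc_of_le hs.1] at hu
      rw [abs_of_nonneg (by linarith [hu.2]), mul_left_comm, ← exp_add]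
      ring_nf
    · rw [uIcc_of_le hs.2] at hu
      rw [abs_of_nonpos (by linarith [hu.1]), mul_left_comm, ← exp_add]
      ring_nf
  have hE : ContinuousOn (fun s => ∫ u in a..s, ψ u * exp (lam * u)) [[a, b]] :=
    continuousOn_primitive_interval (hcont _).integrableOn_uIcc
  have hH : ContinuousOn (fun s => ∫ u in s..b, ψ u * exp (-lam * u)) [[a, b]] :=
    continuousOn_primitive_interval_left (hcont _).integrableOn_uIcc
  calc ∫ s in a..b, ψ s * ∫ u in a..b, ψ u * exp (-lam * |s - u|)
      = ∫ s in a..b, (ψ s * exp (-lam * s) * (∫ u in a..s, ψ u * exp (lam * u))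
          + ψ s * exp (lam * s) * ∫ u in s..b, ψ u * exp (-lam * u)) :=
        integral_congr fun s hs => by rw [split s hs]; ring
    _ = _ := by
        rw [intervalIntegral.integral_add (ContinuousOn.intervalIntegrable (by fun_prop))
            (ContinuousOn.intervalIntegrable (by fun_prop)),
          integral_mul_integral_swap_triangle (hcont _) (hcont _), two_mul]

theorem one_add_integral_exp_kernel_eq {lam C : ℝ} (hC : C ≠ 0) (ha : lam - C ≠ 0) {t : ℝ}
    (ht : 0 ≤ t) :
    1 + 2 * C * (∫ s in 0..t, exp (-(lam - C) * (t - s)) * exp (-lam * |t - s|))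
      + C ^ 2 * ∫ s in 0..t, exp (-(lam - C) * (t - s)) *
          ∫ u in 0..t, exp (-(lam - C) * (t - u)) * exp (-lam * |s - u|)
      = 1 - C / (lam - C) * (exp (-2 * (lam - C) * t) - 1) := by
  obtain ⟨a, rfl⟩ : ∃ a, lam = a + C := ⟨lam - C, by ring⟩
  rw [add_sub_cancel_right] at ha ⊢
  have inner : ∀ s, ∫ u in s..t, exp (-a * (t - u)) * exp (-(a + C) * u)
      = exp (-a * t) * ((exp (-C * t) - exp (-C * s)) / -C) := by
    intro s
    rw [← integral_exp_const_mul (neg_ne_zero.2 hC), ← intervalIntegral.integral_const_mul]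
    exact integral_congr fun u _ => by rw [← exp_add, ← exp_add]; ring_nf
  have pointwise : ∀ s ∈ [[0, t]], exp (-a * (t - s)) * exp (-(a + C) * |t - s|)
      + C * (exp (-a * (t - s)) * exp ((a + C) * s) *
        (exp (-a * t) * ((exp (-C * t) - exp (-C * s)) / -C)))
      = exp (-2 * a * (t - s)) := by
    intro s hs
    rw [uIcc_of_le ht] at hs
    rw [abs_of_nonneg (by linarith [hs.2])]
    field_simp
    simp only [mul_sub, sub_mul, ← exp_add]
    ring_nf
    rw [← exp_nat_mul]
    ring_nf
  have hexp : ∫ s in 0..t, exp (-2 * a * (t - s)) = (1 - exp (-2 * a * t)) / (2 * a) := by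
    rw [integral_comp_sub_left (fun x => exp (-2 * a * x)), sub_self, sub_zero,
      integral_exp_const_mul (by simpa using ha), mul_zero, exp_zero]
    field_simp
    ring
  rw [integral_mul_integral_mul_exp_neg_abs_sub (by fun_prop) _ ht]
  simp only [inner]
  rw [← integral_congr pointwise, intervalIntegral.integral_add
    (by apply Continuous.intervalIntegrable; fun_prop)
    (by apply Continuous.intervalIntegrable; fun_prop),
    intervalIntegral.integral_const_mul] at hexp
  rw [show C / a * (exp (-2 * a * t) - 1) = -(2 * C) * ((1 - exp (-2 * a * t)) / (2 * a)) by
    field_simp; ring, ← hexp]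
  ring

namespace MeasureTheory

variable {T Ω : Type*} [MeasurableSpace T] [MeasurableSpace Ω] {ν : Measure T} {P : Measure Ω}

theorem sq_integral_le_measureReal_univ_mul_integral_sq [IsFiniteMeasure ν] {f : T → ℝ}
    (hf : MemLp f 2 ν) : (∫ s, f s ∂ν) ^ 2 ≤ ν.real univ * ∫ s, f s ^ 2 ∂ν := by
  rcases eq_zero_or_neZero ν with rfl | _
  · simp
  have hm : 0 < ν.real univ := measureReal_univ_pos
  have jensen := (even_two.convexOn_pow (𝕜 := ℝ)).map_average_le (continuous_pow 2).continuousOn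
    isClosed_univ (ae_of_all _ fun _ => mem_univ _) (hf.integrable one_le_two) hf.integrable_sq
  simp only [average_eq, smul_eq_mul] at jensen
  calc (∫ s, f s ∂ν) ^ 2 = ν.real univ ^ 2 * ((ν.real univ)⁻¹ * ∫ s, f s ∂ν) ^ 2 := by
        field_simp
    _ ≤ ν.real univ ^ 2 * ((ν.real univ)⁻¹ * ∫ s, f s ^ 2 ∂ν) := by gcongr
    _ = ν.real univ * ∫ s, f s ^ 2 ∂ν := by field_simp

theorem memLp_two_uncurry_of_integral_sq_le [SFinite P] [IsFiniteMeasure ν] {Y : T → Ω → ℝ}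
    (hY : AEStronglyMeasurable (uncurry Y) (ν.prod P))
    (hint : ∀ᵐ s ∂ν, Integrable (fun ω => Y s ω ^ 2) P) {M : ℝ}
    (hM : ∀ᵐ s ∂ν, ∫ ω, Y s ω ^ 2 ∂P ≤ M) : MemLp (uncurry Y) 2 (ν.prod P) := by
  rw [memLp_two_iff_integrable_sq hY]
  refine (integrable_prod_iff (hY.pow 2)).2
    ⟨hint, (integrable_const M).mono' (hY.pow 2).norm.integral_prod_right' ?_⟩
  filter_upwards [hM] with s hs
  simp only [Pi.pow_apply, uncurry_apply_pair, norm_pow, Real.norm_eq_abs, sq_abs]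
  rwa [abs_of_nonneg (integral_nonneg fun _ => sq_nonneg _)]

theorem integral_add_const_mul_sq {f g : Ω → ℝ} (hf : MemLp f 2 P) (hg : MemLp g 2 P) (c : ℝ) :
    ∫ ω, (f ω + c * g ω) ^ 2 ∂P
      = ∫ ω, f ω ^ 2 ∂P + 2 * c * ∫ ω, f ω * g ω ∂P + c ^ 2 * ∫ ω, g ω ^ 2 ∂P := by
  have hfg : Integrable (fun ω => 2 * c * (f ω * g ω)) P := (hf.integrable_mul hg).const_mul _
  have hg2 : Integrable (fun ω => c ^ 2 * g ω ^ 2) P := hg.integrable_sq.const_mul _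
  calc ∫ ω, (f ω + c * g ω) ^ 2 ∂P
      = ∫ ω, (f ω ^ 2 + 2 * c * (f ω * g ω) + c ^ 2 * g ω ^ 2) ∂P :=
        integral_congr_ae (ae_of_all _ fun ω => by ring)
    _ = _ := by
        rw [integral_add (by exact hf.integrable_sq.add hfg) hg2, integral_add hf.integrable_sq hfg,
          MeasureTheory.integral_const_mul, MeasureTheory.integral_const_mul]

variable [SFinite P] [IsFiniteMeasure ν] {F : T → Ω → ℝ}

theorem MemLp.integral_uncurry (hF : MemLp (uncurry F) 2 (ν.prod P)) :
    MemLp (fun ω => ∫ s, F s ω ∂ν) 2 P := by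
  have hmeas : AEStronglyMeasurable (fun ω => ∫ s, F s ω ∂ν) P :=
    hF.1.prod_swap.integral_prod_right'
  have hsq : Integrable (fun p => uncurry F p ^ 2) (ν.prod P) :=
    (memLp_two_iff_integrable_sq hF.1).1 hF
  rw [memLp_two_iff_integrable_sq hmeas]
  refine (hsq.integral_prod_right.const_mul (ν.real univ)).mono' (hmeas.pow 2) ?_
  filter_upwards [hF.1.prodMk_right, hsq.prod_left_ae] with ω hm hi
  rw [Real.norm_of_nonneg (sq_nonneg _)]
  exact sq_integral_le_measureReal_univ_mul_integral_sq ((memLp_two_iff_integrable_sq hm).2 hi)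

theorem MemLp.ae_memLp_two_prodMk_left (hF : MemLp (uncurry F) 2 (ν.prod P)) :
    ∀ᵐ s ∂ν, MemLp (F s) 2 P := by
  filter_upwards [hF.1.prodMk_left, ((memLp_two_iff_integrable_sq hF.1).1 hF).prod_right_ae]
    with s hm hi
  exact (memLp_two_iff_integrable_sq hm).2 hi

theorem integral_mul_integral_eq_integral_integral_mul (hF : MemLp (uncurry F) 2 (ν.prod P))
    {g : Ω → ℝ} (hg : MemLp g 2 P) :
    ∫ ω, g ω * ∫ s, F s ω ∂ν ∂P = ∫ s, ∫ ω, g ω * F s ω ∂P ∂ν := by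
  have hint : Integrable (uncurry fun s ω => g ω * F s ω) (ν.prod P) :=
    (hg.comp_snd ν).integrable_mul hF
  rw [integral_integral_swap hint]
  exact integral_congr_ae (ae_of_all _ fun ω => (MeasureTheory.integral_const_mul _ _).symm)

theorem integral_sq_integral_eq (hF : MemLp (uncurry F) 2 (ν.prod P)) :
    ∫ ω, (∫ s, F s ω ∂ν) ^ 2 ∂P = ∫ s, ∫ u, ∫ ω, F s ω * F u ω ∂P ∂ν ∂ν := by
  calc ∫ ω, (∫ s, F s ω ∂ν) ^ 2 ∂P = ∫ s, ∫ ω, F s ω * ∫ u, F u ω ∂ν ∂P ∂ν := by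
        simp_rw [sq, integral_mul_integral_eq_integral_integral_mul hF hF.integral_uncurry,
          mul_comm]
    _ = ∫ s, ∫ u, ∫ ω, F s ω * F u ω ∂P ∂ν ∂ν := by
        refine integral_congr_ae ?_
        filter_upwards [hF.ae_memLp_two_prodMk_left] with s hs
        exact integral_mul_integral_eq_integral_integral_mul hF hs

end MeasureTheory

theorem integral_sq_eq_of_exp_covariance {Ω : Type*} [MeasurableSpace Ω] (P : Measure Ω)
    [IsFiniteMeasure P] {σ2 lam C : ℝ} (hC : C ≠ 0) (hCl : C ≠ lam)
    {Y : ℝ → Ω → ℝ} (hmeas : Measurable (uncurry Y))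
    (hsq : ∀ t : ℝ, 0 ≤ t → Integrable (fun ω => (Y t ω) ^ 2) P)
    (hcov : ∀ s t : ℝ, 0 ≤ s → 0 ≤ t →
      ∫ ω, Y t ω * Y s ω ∂P = σ2 * exp (-lam * |t - s|))
    {X : ℝ → Ω → ℝ}
    (hX : ∀ t ω, X t ω = Y t ω + C * ∫ s in (0:ℝ)..t, exp (-(lam - C) * (t - s)) * Y s ω)
    {t : ℝ} (ht : 0 ≤ t) :
    ∫ ω, X t ω ^ 2 ∂P = σ2 * (1 - C / (lam - C) * (exp (-2 * (lam - C) * t) - 1)) := by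
  set ν := volume.restrict (Ioc 0 t)
  set k : ℝ → ℝ := fun s => exp (-(lam - C) * (t - s))
  have hvar : ∀ s, 0 ≤ s → ∫ ω, Y s ω ^ 2 ∂P = σ2 := fun s hs => by
    simpa [sq] using hcov s s hs hs
  have hY : MemLp (uncurry Y) 2 (ν.prod P) :=
    memLp_two_uncurry_of_integral_sq_le hmeas.aestronglyMeasurable
      (ae_restrict_of_forall_mem measurableSet_Ioc fun s hs => hsq s hs.1.le)
      (ae_restrict_of_forall_mem measurableSet_Ioc fun s hs => (hvar s hs.1.le).le)
  have hk : MemLp k ∞ ν := by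
    obtain ⟨K, hK⟩ := isCompact_Icc.exists_bound_of_continuousOn
      (by fun_prop : Continuous k).continuousOn (s := Icc 0 t)
    exact memLp_top_of_bound (by fun_prop : Continuous k).aestronglyMeasurable K
      (ae_restrict_of_forall_mem measurableSet_Ioc fun s hs => hK s (Ioc_subset_Icc_self hs))
  have hF : MemLp (uncurry fun s ω => k s * Y s ω) 2 (ν.prod P) := hY.mul' (hk.comp_fst P)
  have hYt : MemLp (Y t) 2 P :=
    (memLp_two_iff_integrable_sq hmeas.of_uncurry_left.aestronglyMeasurable).2 (hsq t ht)
  have hXI : ∀ ω, X t ω = Y t ω + C * ∫ s, k s * Y s ω ∂ν := fun ω => by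
    rw [hX, integral_of_le ht]
  have cross : ∫ ω, Y t ω * (∫ s, k s * Y s ω ∂ν) ∂P
      = σ2 * ∫ s in 0..t, k s * exp (-lam * |t - s|) := by
    rw [integral_mul_integral_eq_integral_integral_mul hF hYt, integral_of_le ht,
      ← MeasureTheory.integral_const_mul]
    refine setIntegral_congr_fun measurableSet_Ioc fun s hs => ?_
    simp only [mul_left_comm (Y t _)]
    rw [MeasureTheory.integral_const_mul, hcov s t hs.1.le ht]
    ring
  have square : ∫ ω, (∫ s, k s * Y s ω ∂ν) ^ 2 ∂P
      = σ2 * ∫ s in 0..t, k s * ∫ u in 0..t, k u * exp (-lam * |s - u|) := by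
    rw [integral_sq_integral_eq hF, integral_of_le ht, ← MeasureTheory.integral_const_mul]
    refine setIntegral_congr_fun measurableSet_Ioc fun s hs => ?_
    rw [integral_of_le ht, mul_left_comm, ← MeasureTheory.integral_const_mul,
      ← MeasureTheory.integral_const_mul]
    refine setIntegral_congr_fun measurableSet_Ioc fun u hu => ?_
    calc ∫ ω, k s * Y s ω * (k u * Y u ω) ∂P = ∫ ω, k s * k u * (Y s ω * Y u ω) ∂P :=
          integral_congr_ae (ae_of_all _ fun ω => by ring)
      _ = _ := by rw [MeasureTheory.integral_const_mul, hcov u s hu.1.le hs.1.le]; ring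
  simp_rw [hXI]
  rw [integral_add_const_mul_sq hYt hF.integral_uncurry, hvar t ht, cross, square,
    ← one_add_integral_exp_kernel_eq hC (sub_ne_zero.2 hCl.symm) ht]
  ring

theorem strictMono_mul_one_sub_div_mul_exp_sub_one {σ2 C a : ℝ} (hσ : 0 < σ2) (hC : 0 < C)
    (ha : a ≠ 0) : StrictMono fun t => σ2 * (1 - C / a * (exp (-2 * a * t) - 1)) := by
  refine strictMono_of_hasDerivAt_pos (f' := fun t => 2 * C * σ2 * exp (-2 * a * t))
    (fun t => ?_) fun t => by positivity
  have := ((((hasDerivAt_id t).const_mul (-2 * a)).exp.sub_const 1).const_mul (C / a)).const_sub 1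
    |>.const_mul σ2
  refine this.congr_deriv ?_
  simp only [id]
  field_simp

theorem tendsto_mul_one_sub_div_mul_exp_sub_one_atTop {σ2 C a : ℝ} (hσ : 0 < σ2) (hC : 0 < C)
    (ha : a < 0) :
    Filter.Tendsto (fun t => σ2 * (1 - C / a * (exp (-2 * a * t) - 1)))
      Filter.atTop Filter.atTop := by
  have hexp : Filter.Tendsto (fun t => exp (-2 * a * t)) Filter.atTop Filter.atTop :=
    tendsto_exp_atTop.comp (Filter.tendsto_id.const_mul_atTop (by linarith))
  have hcoef : 0 < σ2 * -(C / a) := mul_pos hσ (neg_pos.2 (div_neg_of_pos_of_neg hC ha))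
  refine Filter.tendsto_atTop_add_const_right _ (σ2 * (1 + C / a)) (hexp.const_mul_atTop hcoef)
    |>.congr fun t => ?_
  ring

theorem stmt8_general {Ω : Type*} [MeasurableSpace Ω] (P : Measure Ω) [IsProbabilityMeasure P]
    (σ2 lam C : ℝ) (hσ : 0 < σ2) (hC : 0 < C) (hCl : C ≠ lam)
    (Y : ℝ → Ω → ℝ) (hmeas : Measurable (Function.uncurry Y))
    (hsq : ∀ t : ℝ, 0 ≤ t → Integrable (fun ω => (Y t ω) ^ 2) P)
    (hcov : ∀ s t : ℝ, 0 ≤ s → 0 ≤ t →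
      ∫ ω, Y t ω * Y s ω ∂P = σ2 * Real.exp (-lam * |t - s|))
    (X : ℝ → Ω → ℝ)
    (hX : ∀ t ω, X t ω
      = Y t ω + C * ∫ s in (0:ℝ)..t, Real.exp (-(lam - C) * (t - s)) * Y s ω) :
    (∀ t : ℝ, 0 ≤ t →
      ∫ ω, (X t ω) ^ 2 ∂P
        = σ2 * (1 - C / (lam - C) * (Real.exp (-2 * (lam - C) * t) - 1))) ∧
    (∀ t : ℝ, 0 < t → σ2 < ∫ ω, (X t ω) ^ 2 ∂P) ∧
    (∀ s t : ℝ, 0 ≤ s → s < t → ∫ ω, (X s ω) ^ 2 ∂P < ∫ ω, (X t ω) ^ 2 ∂P) ∧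
    (lam < C → Filter.Tendsto (fun t => ∫ ω, (X t ω) ^ 2 ∂P) Filter.atTop Filter.atTop) := by
  have second_moment := fun t (ht : 0 ≤ t) =>
    integral_sq_eq_of_exp_covariance P hC.ne' hCl hmeas hsq hcov hX ht
  have mono := strictMono_mul_one_sub_div_mul_exp_sub_one hσ hC (sub_ne_zero.2 hCl.symm)
  refine ⟨second_moment, fun t ht => ?_, fun s t hs hst => ?_, fun hlC => ?_⟩
  · rw [second_moment t ht.le]
    simpa using mono ht
  · rw [second_moment s hs, second_moment t (hs.trans hst.le)]
    exact mono hst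
  · refine (tendsto_mul_one_sub_div_mul_exp_sub_one_atTop hσ hC (sub_neg.2 hlC)).congr' ?_
    filter_upwards [Filter.eventually_ge_atTop 0] with t ht
    exact (second_moment t ht).symm

/-- If `E[Y_t Y_s] = σ² e^{−λ|t−s|}`, `C > 0`, `C ≠ λ`, and
`X_t = Y_t + C ∫_0^t e^{−(λ−C)(t−s)} Y_s ds`, then
`E[X_t²] = σ²(1 − (C/(λ−C))(e^{−2(λ−C)t} − 1))`, which is `> σ²` for `t > 0`, increasing,
and tends to `+∞` if `C > λ`. -/
theorem stmt8 {Ω : Type*} [MeasurableSpace Ω] (P : Measure Ω) [IsProbabilityMeasure P]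
    (σ2 lam C : ℝ) (hσ : 0 < σ2) (hlam : 0 < lam) (hC : 0 < C) (hCl : C ≠ lam)
    (Y : ℝ → Ω → ℝ) (hmeas : Measurable (Function.uncurry Y))
    (hpath : ∀ ω, Continuous fun t => Y t ω)
    (hsq : ∀ t : ℝ, 0 ≤ t → Integrable (fun ω => (Y t ω) ^ 2) P)
    (hcov : ∀ s t : ℝ, 0 ≤ s → 0 ≤ t →
      ∫ ω, Y t ω * Y s ω ∂P = σ2 * Real.exp (-lam * |t - s|))
    (X : ℝ → Ω → ℝ)
    (hX : ∀ t ω, X t ω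
      = Y t ω + C * ∫ s in (0:ℝ)..t, Real.exp (-(lam - C) * (t - s)) * Y s ω) :
    (∀ t : ℝ, 0 ≤ t →
      ∫ ω, (X t ω) ^ 2 ∂P
        = σ2 * (1 - C / (lam - C) * (Real.exp (-2 * (lam - C) * t) - 1))) ∧
    (∀ t : ℝ, 0 < t → σ2 < ∫ ω, (X t ω) ^ 2 ∂P) ∧
    (∀ s t : ℝ, 0 ≤ s → s < t → ∫ ω, (X s ω) ^ 2 ∂P < ∫ ω, (X t ω) ^ 2 ∂P) ∧
    (lam < C → Filter.Tendsto (fun t => ∫ ω, (X t ω) ^ 2 ∂P) Filter.atTop Filter.atTop) :=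
  stmt8_general P σ2 lam C hσ hC hCl Y hmeas hsq hcov X hX
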